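/- Let μ be a finite measure on E, u : E → ℝ measurable, u_k = (−k) ∨ u ∧ k, and suppose measurable functions U, U_k : ℝ → [0,∞) satisfy ∫_E h(u(x)) dμ = ∫_ℝ h U dx and ∫_E h(u_k(x)) dμ_k = ∫_ℝ h U_k dx for all nonnegative measurable h, where μ_k is a measure with the property that for every continuous f supported in [−k,k], ∫_E f²(u_k) dμ_k = ∫_E f²(u) dμ. Then U_k(x) = 1_{[−k,k]}(x) U(x) for Lebesgue-a.e. x ∈ ℝ. -/

import Mathlib

open MeasureTheory ENNReal

/-- If `u_*μ = U dx`, `(u_k)_*μ_k = U_k dx` where `u_k = (-k) ∨ u ∧ k`, and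
`∫ f²(u_k) dμ_k = ∫ f²(u) dμ` for every continuous `f` supported in `[-k,k]`,
then `U_k = 1_{[-k,k]} U` Lebesgue-a.e. -/
theorem stmt9_truncated_density
    {E : Type*} [MeasurableSpace E]
    (μ μk : Measure E) [IsFiniteMeasure μ] [IsFiniteMeasure μk]
    (k : ℕ) (u : E → ℝ) (hu : Measurable u)
    (uk : E → ℝ) (huk : ∀ x, uk x = max (-(k : ℝ)) (min (u x) (k : ℝ)))
    (U Uk : ℝ → ℝ≥0∞) (hU : Measurable U) (hUk : Measurable Uk)
    (hmap : Measure.map u μ = volume.withDensity U)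
    (hmapk : Measure.map uk μk = volume.withDensity Uk)
    (hagree : ∀ f : ℝ → ℝ, Continuous f →
      (Function.support f ⊆ Set.Icc (-(k : ℝ)) (k : ℝ)) →
      ∫⁻ x, ENNReal.ofReal ((f (uk x)) ^ 2) ∂μk =
        ∫⁻ x, ENNReal.ofReal ((f (u x)) ^ 2) ∂μ) :
    ∀ᵐ x : ℝ, Uk x = (Set.Icc (-(k : ℝ)) (k : ℝ)).indicator U x := by
  set I : Set ℝ := Set.Icc (-(k : ℝ)) (k : ℝ) with hI
  set V : ℝ → ℝ≥0∞ := I.indicator U with hV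
  have hVm : Measurable V := hU.indicator measurableSet_Icc
  have hukm : Measurable uk := by
    have : uk = fun x => max (-(k : ℝ)) (min (u x) (k : ℝ)) := funext huk
    rw [this]
    exact measurable_const.max (hu.min measurable_const)
  have hkk : (-(k : ℝ)) ≤ (k : ℝ) := by
    have : (0:ℝ) ≤ (k:ℝ) := Nat.cast_nonneg k
    linarith
  have hrange : ∀ x, uk x ∈ I := by
    intro x
    rw [huk]
    exact ⟨le_max_left _ _, max_le hkk ((min_le_right _ _))⟩
  -- Step B : Uk = 0 a.e. outside I
  have hB : ∀ᵐ x : ℝ, x ∉ I → Uk x = 0 := by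
    have h0 : ∫⁻ x in Iᶜ, Uk x = 0 := by
      rw [← withDensity_apply Uk measurableSet_Icc.compl, ← hmapk,
        Measure.map_apply hukm measurableSet_Icc.compl]
      have : uk ⁻¹' Iᶜ = ∅ := by
        ext x; simp [hrange x]
      rw [this, measure_empty]
    have h1 : Uk =ᵐ[volume.restrict Iᶜ] 0 := (lintegral_eq_zero_iff hUk).mp h0
    exact ae_imp_of_ae_restrict h1
  -- a.e. x is not a boundary point
  have hne : ∀ᵐ x : ℝ, x ≠ -(k:ℝ) ∧ x ≠ (k:ℝ) := by
    have h : ∀ c : ℝ, ∀ᵐ x : ℝ, x ≠ c := by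
      intro c
      rw [ae_iff]
      have : {x : ℝ | ¬ x ≠ c} = {c} := by ext y; simp
      rw [this]
      exact measure_singleton c
    exact (h _).and (h _)
  -- key equality for nonnegative continuous functions supported in I
  have hg : ∀ g : ℝ → ℝ, Continuous g → (∀ x, 0 ≤ g x) → Function.support g ⊆ I →
      ∫⁻ x, Uk x * ENNReal.ofReal (g x) = ∫⁻ x, V x * ENNReal.ofReal (g x) := by
    intro g hgc hg0 hgs
    set f : ℝ → ℝ := fun x => Real.sqrt (g x) with hf
    have hfc : Continuous f := Real.continuous_sqrt.comp hgc
    have hfs : Function.support f ⊆ I := by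
      intro x hx
      apply hgs
      intro h0
      apply hx
      simp [hf, h0]
    have hsq : ∀ y, (f y) ^ 2 = g y := fun y => Real.sq_sqrt (hg0 y)
    have key := hagree f hfc hfs
    have hfm : Measurable fun y => ENNReal.ofReal ((f y) ^ 2) :=
      ((hfc.pow 2).measurable).ennreal_ofReal
    rw [← lintegral_map hfm hukm, ← lintegral_map hfm hu, hmap, hmapk,
      lintegral_withDensity_eq_lintegral_mul _ hUk hfm,
      lintegral_withDensity_eq_lintegral_mul _ hU hfm] at key
    calc ∫⁻ x, Uk x * ENNReal.ofReal (g x)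
        = ∫⁻ x, (Uk * fun y => ENNReal.ofReal ((f y)^2)) x := by
          simp only [Pi.mul_apply, hsq]
      _ = ∫⁻ x, (U * fun y => ENNReal.ofReal ((f y)^2)) x := key
      _ = ∫⁻ x, V x * ENNReal.ofReal (g x) := by
          apply lintegral_congr
          intro x
          simp only [Pi.mul_apply, hsq]
          by_cases hx : x ∈ I
          · rw [hV, Set.indicator_of_mem hx]
          · have : g x = 0 := Function.notMem_support.mp (fun h => hx (hgs h))
            simp [this, hV, Set.indicator_of_notMem hx]
  -- the two withDensity measures are equal
  have hfin : IsFiniteMeasure (volume.withDensity Uk) := by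
    constructor
    rw [← hmapk, Measure.map_apply hukm MeasurableSet.univ]
    exact measure_lt_top μk _
  have hmeas_eq : volume.withDensity Uk = volume.withDensity V := by
    apply ext_of_forall_lintegral_eq_of_IsFiniteMeasure
    intro φ
    have hφm : Measurable fun x : ℝ => (φ x : ℝ≥0∞) :=
      measurable_coe_nnreal_ennreal.comp φ.continuous.measurable
    rw [lintegral_withDensity_eq_lintegral_mul _ hUk hφm,
      lintegral_withDensity_eq_lintegral_mul _ hVm hφm]
    -- cutoff functions
    set χ : ℕ → ℝ → ℝ := fun n x => max 0 (min 1 (n * ((k:ℝ) - |x|))) with hχ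
    have hχc : ∀ n, Continuous (χ n) := by
      intro n
      exact continuous_const.max (continuous_const.min (continuous_const.mul
        (continuous_const.sub continuous_abs)))
    have hχ0 : ∀ n x, 0 ≤ χ n x := fun n x => le_max_left _ _
    have hχle : ∀ n x, χ n x ≤ 1 := fun n x => max_le zero_le_one (min_le_left _ _)
    have hχzero : ∀ (n : ℕ) (x : ℝ), (k:ℝ) ≤ |x| → χ n x = 0 := by
      intro n x hx
      have hnp : (n:ℝ) * ((k:ℝ) - |x|) ≤ 0 :=
        mul_nonpos_of_nonneg_of_nonpos (Nat.cast_nonneg n) (by linarith)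
      exact max_eq_left (min_le_of_right_le hnp)
    have hχs : ∀ n, Function.support (χ n) ⊆ I := by
      intro n x hx
      by_contra hxI
      have : (k:ℝ) ≤ |x| := by
        rw [hI, Set.mem_Icc, not_and_or, not_le, not_le] at hxI
        rcases hxI with h | h
        · exact le_abs.mpr (Or.inr (by linarith))
        · exact le_abs.mpr (Or.inl h.le)
      exact hx (hχzero n x this)
    have hχmono : ∀ x, Monotone fun n => χ n x := by
      intro x m n hmn
      rcases le_or_gt ((k:ℝ) - |x|) 0 with h | h
      · have hm : (m:ℝ) * ((k:ℝ) - |x|) ≤ 0 :=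
          mul_nonpos_of_nonneg_of_nonpos (Nat.cast_nonneg m) h
        have hn : (n:ℝ) * ((k:ℝ) - |x|) ≤ 0 :=
          mul_nonpos_of_nonneg_of_nonpos (Nat.cast_nonneg n) h
        simp only [hχ]
        rw [max_eq_left (min_le_of_right_le hm), max_eq_left (min_le_of_right_le hn)]
      · apply max_le_max le_rfl
        apply min_le_min le_rfl
        have : (m:ℝ) ≤ n := Nat.cast_le.mpr hmn
        nlinarith
    have hχsup : ∀ x, (⨆ n, ENNReal.ofReal (χ n x))
        = (Set.Ioo (-(k:ℝ)) (k:ℝ)).indicator 1 x := by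
      intro x
      by_cases hx : x ∈ Set.Ioo (-(k:ℝ)) (k:ℝ)
      · rw [Set.indicator_of_mem hx]
        have habs : |x| < (k:ℝ) := abs_lt.mpr ⟨hx.1, hx.2⟩
        have hpos : (0:ℝ) < (k:ℝ) - |x| := by linarith
        apply le_antisymm
        · apply iSup_le
          intro n
          calc ENNReal.ofReal (χ n x) ≤ ENNReal.ofReal 1 :=
                ENNReal.ofReal_le_ofReal (hχle n x)
            _ = 1 := ENNReal.ofReal_one
        · obtain ⟨n, hn⟩ := exists_nat_ge (1 / ((k:ℝ) - |x|))
          have h1 : (1:ℝ) ≤ n * ((k:ℝ) - |x|) := by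
            rw [div_le_iff₀ hpos] at hn
            linarith
          have hone : χ n x = 1 := by
            simp only [hχ]
            rw [min_eq_left h1, max_eq_right zero_le_one]
          calc (1:ℝ≥0∞) = ENNReal.ofReal (χ n x) := by rw [hone, ENNReal.ofReal_one]
            _ ≤ ⨆ n, ENNReal.ofReal (χ n x) := le_iSup (fun n => ENNReal.ofReal (χ n x)) n
      · rw [Set.indicator_of_notMem hx]
        have habs : (k:ℝ) ≤ |x| := by
          rw [Set.mem_Ioo, not_and_or, not_lt, not_lt] at hx
          rcases hx with h | h
          · exact le_abs.mpr (Or.inr (by linarith))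
          · exact le_abs.mpr (Or.inl h)
        have : ∀ n, χ n x = 0 := fun n => hχzero n x habs
        simp [this]
    -- step for each n
    have hstep : ∀ n : ℕ,
        ∫⁻ x, Uk x * ((φ x : ℝ≥0∞) * ENNReal.ofReal (χ n x)) =
        ∫⁻ x, V x * ((φ x : ℝ≥0∞) * ENNReal.ofReal (χ n x)) := by
      intro n
      have hconv : ∀ x : ℝ, ENNReal.ofReal ((φ x : ℝ) * χ n x)
          = (φ x : ℝ≥0∞) * ENNReal.ofReal (χ n x) := by
        intro x
        rw [ENNReal.ofReal_mul (φ x).coe_nonneg, ENNReal.ofReal_coe_nnreal]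
      have := hg (fun x => (φ x : ℝ) * χ n x)
        ((φ.continuous.subtype_val).mul (hχc n))
        (fun x => mul_nonneg (φ x).coe_nonneg (hχ0 n x))
        (fun x hx => hχs n (fun h0 => hx (by simp [h0])))
      simpa only [hconv] using this
    -- pointwise suprema
    have hsupUk : ∀ x : ℝ, (⨆ n, Uk x * ((φ x : ℝ≥0∞) * ENNReal.ofReal (χ n x)))
        = Uk x * ((φ x : ℝ≥0∞) * (Set.Ioo (-(k:ℝ)) (k:ℝ)).indicator 1 x) := by
      intro x
      rw [← hχsup x, ENNReal.mul_iSup, ENNReal.mul_iSup]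
    have hsupV : ∀ x : ℝ, (⨆ n, V x * ((φ x : ℝ≥0∞) * ENNReal.ofReal (χ n x)))
        = V x * ((φ x : ℝ≥0∞) * (Set.Ioo (-(k:ℝ)) (k:ℝ)).indicator 1 x) := by
      intro x
      rw [← hχsup x, ENNReal.mul_iSup, ENNReal.mul_iSup]
    have hmeasχ : ∀ n : ℕ, Measurable fun x : ℝ => (φ x : ℝ≥0∞) * ENNReal.ofReal (χ n x) :=
      fun n => hφm.mul ((hχc n).measurable.ennreal_ofReal)
    have hmonoF : ∀ x : ℝ, Monotone fun n : ℕ => (φ x : ℝ≥0∞) * ENNReal.ofReal (χ n x) :=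
      fun x m n hmn => mul_le_mul' le_rfl (ENNReal.ofReal_le_ofReal (hχmono x hmn))
    have hintUk : ∫⁻ x, Uk x * ((φ x : ℝ≥0∞) * (Set.Ioo (-(k:ℝ)) (k:ℝ)).indicator 1 x)
        = ⨆ n, ∫⁻ x, Uk x * ((φ x : ℝ≥0∞) * ENNReal.ofReal (χ n x)) := by
      rw [← lintegral_iSup (f := fun n x => Uk x * ((φ x : ℝ≥0∞) * ENNReal.ofReal (χ n x))) (fun n => hUk.mul (hmeasχ n))
        (fun m n hmn => fun x => mul_le_mul' le_rfl (hmonoF x hmn))]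
      exact lintegral_congr fun x => (hsupUk x).symm
    have hintV : ∫⁻ x, V x * ((φ x : ℝ≥0∞) * (Set.Ioo (-(k:ℝ)) (k:ℝ)).indicator 1 x)
        = ⨆ n, ∫⁻ x, V x * ((φ x : ℝ≥0∞) * ENNReal.ofReal (χ n x)) := by
      rw [← lintegral_iSup (f := fun n x => V x * ((φ x : ℝ≥0∞) * ENNReal.ofReal (χ n x))) (fun n => hVm.mul (hmeasχ n))
        (fun m n hmn => fun x => mul_le_mul' le_rfl (hmonoF x hmn))]
      exact lintegral_congr fun x => (hsupV x).symm
    -- removing the indicator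
    have hremUk : ∫⁻ x, (Uk * fun x => (φ x : ℝ≥0∞)) x
        = ∫⁻ x, Uk x * ((φ x : ℝ≥0∞) * (Set.Ioo (-(k:ℝ)) (k:ℝ)).indicator 1 x) := by
      apply lintegral_congr_ae
      filter_upwards [hB, hne] with x hx hxne
      simp only [Pi.mul_apply]
      by_cases hIoo : x ∈ Set.Ioo (-(k:ℝ)) (k:ℝ)
      · rw [Set.indicator_of_mem hIoo]; simp
      · have hxI : x ∉ I := by
          intro hmem
          rw [hI, Set.mem_Icc] at hmem
          rw [Set.mem_Ioo, not_and_or, not_lt, not_lt] at hIoo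
          rcases hIoo with h | h
          · exact hxne.1 (le_antisymm h hmem.1)
          · exact hxne.2 (le_antisymm hmem.2 h)
        rw [hx hxI]
        simp
    have hremV : ∫⁻ x, (V * fun x => (φ x : ℝ≥0∞)) x
        = ∫⁻ x, V x * ((φ x : ℝ≥0∞) * (Set.Ioo (-(k:ℝ)) (k:ℝ)).indicator 1 x) := by
      apply lintegral_congr_ae
      filter_upwards [hne] with x hxne
      simp only [Pi.mul_apply]
      by_cases hIoo : x ∈ Set.Ioo (-(k:ℝ)) (k:ℝ)
      · rw [Set.indicator_of_mem hIoo]; simp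
      · have hxI : x ∉ I := by
          intro hmem
          rw [hI, Set.mem_Icc] at hmem
          rw [Set.mem_Ioo, not_and_or, not_lt, not_lt] at hIoo
          rcases hIoo with h | h
          · exact hxne.1 (le_antisymm h hmem.1)
          · exact hxne.2 (le_antisymm hmem.2 h)
        have : V x = 0 := by rw [hV, Set.indicator_of_notMem hxI]
        rw [this]
        simp
    rw [hremUk, hremV, hintUk, hintV]
    exact iSup_congr hstep
  rw [withDensity_eq_iff_of_sigmaFinite hUk.aemeasurable hVm.aemeasurable] at hmeas_eq
  exact hmeas_eq
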